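/- If the classical propositional formula α is a tautology, then Prob(α) = 1. -/

import Mathlib

open scoped InnerProductSpace

noncomputable section

/-- Classical propositional formulas, built from propositional symbols `B_j` (`j : ℕ`)
and `⊤` using `¬` and `→`. -/
inductive PropForm : Type
  | verum : PropForm
  | var : ℕ → PropForm
  | neg : PropForm → PropForm
  | imp : PropForm → PropForm → PropForm

namespace PropForm

/-- The (finite) set of propositional symbols occurring in a formula. -/
def symbols : PropForm → Finset ℕ
  | verum => ∅
  | var n => {n}
  | neg a => a.symbols
  | imp a b => a.symbols ∪ b.symbols

/-- Truth-table evaluation of a formula under a (total) assignment of truth values. -/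
def eval (w : ℕ → Bool) : PropForm → Bool
  | verum => true
  | var n => w n
  | neg a => !(a.eval w)
  | imp a b => !(a.eval w) || b.eval w

end PropForm

/-- A valuation `v` on a set `A` of propositional symbols (with `A ⊇ B_α`) satisfies `α`. -/
def Sat (A : Finset ℕ) (v : {n // n ∈ A} → Bool) (α : PropForm) : Prop :=
  PropForm.eval (fun n => if h : n ∈ A then v ⟨n, h⟩ else false) α = true

instance (A : Finset ℕ) (α : PropForm) : DecidablePred (fun v => Sat A v α) := fun _ => by
  unfold Sat; infer_instance

variable {ι H : Type*} [NormedAddCommGroup H] [InnerProductSpace ℂ H] [CompleteSpace H]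

/-- `Hs u S` is the topological closure of the linear span of `{u i : i ∈ S}`. -/
def Hs (u : HilbertBasis ι ℂ H) (S : Set ι) : Submodule ℂ H :=
  (Submodule.span ℂ ((fun i => u i) '' S)).topologicalClosure

instance (u : HilbertBasis ι ℂ H) (S : Set ι) : Submodule.HasOrthogonalProjection (Hs u S) :=
  haveI : CompleteSpace (Hs u S) :=
    (Submodule.isClosed_topologicalClosure _).isComplete.completeSpace_coe
  Submodule.HasOrthogonalProjection.ofCompleteSpace _

/-- The orthogonal projection of `H` onto `Hs u S`, as an operator on `H`. -/
def P (u : HilbertBasis ι ℂ H) (S : Set ι) : H →L[ℂ] H :=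
  (Hs u S).subtypeL.comp (Submodule.orthogonalProjectionOnto (Hs u S))

/-- `Pj u lam j S` is the orthogonal projection onto the closure of the span of
`{u i : lam j i ∈ S}`. -/
def Pj (u : HilbertBasis ι ℂ H) (lam : ℕ → ι → ℝ) (j : ℕ) (S : Set ℝ) : H →L[ℂ] H :=
  P u {i | lam j i ∈ S}

/-- `Prob u lam up ψ α` is the probability assigned to the classical formula `α`:
the sum, over the valuations `v` on `B_α` satisfying `α`, of
`Re ⟪ψ, P_{j_k}(D_{j_k}^v)(⋯ (P_{j_1}(D_{j_1}^v) ψ) ⋯)⟫` where `B_α = {j_1 < … < j_k}`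
and `D_j^v` is `up j` if `v (B_j) = 1` and its complement otherwise. -/
def Prob (u : HilbertBasis ι ℂ H) (lam : ℕ → ι → ℝ) (up : ℕ → Set ℝ) (ψ : H)
    (α : PropForm) : ℝ :=
  ∑ v ∈ Finset.univ.filter (fun v : {n // n ∈ α.symbols} → Bool => Sat α.symbols v α),
    (⟪ψ, (α.symbols.sort (· ≤ ·)).foldl
        (fun x j => if h : j ∈ α.symbols then
            Pj u lam j (if v ⟨j, h⟩ then up j else (up j)ᶜ) x
          else x) ψ⟫_ℂ).re

/-!
For each symbol `B_j` the projections `P_j(↑_j)` and `P_j(↓_j)` project onto complementary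
orthogonal subspaces (the basis vectors `u_i` are split according to whether `λ_j(i) ∈ ↑_j`),
so they add up to the identity. For a tautology every valuation is summed over, and resolving
the symbols one at a time by this identity collapses the sum of the chains of projections to
`ψ`. Hence `Prob(α) = Re ⟪ψ, ψ⟫ = ‖ψ‖² = 1`.
-/

section ProjectionChain

variable {κ M : Type*} [DecidableEq κ] [AddCommMonoid M] (T : κ → Bool → M →+ M) (A : Finset κ)

def projChain (v : A → Bool) (l : List κ) (x : M) : M :=
  l.foldl (fun y j => if h : j ∈ A then T j (v ⟨j, h⟩) y else y) x

variable {T A}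

lemma projChain_cons (v : A → Bool) (j : κ) (l : List κ) (x : M) :
    projChain T A v (j :: l) x =
      projChain T A v l (if h : j ∈ A then T j (v ⟨j, h⟩) x else x) :=
  rfl

lemma projChain_add (v : A → Bool) (l : List κ) (x y : M) :
    projChain T A v l (x + y) = projChain T A v l x + projChain T A v l y := by
  induction l generalizing x y with
  | nil => rfl
  | cons j l ih => simp only [projChain_cons, ← ih]; split_ifs <;> simp

lemma projChain_congr {v w : A → Bool} {l : List κ}
    (hvw : ∀ j (hj : j ∈ A), j ∈ l → v ⟨j, hj⟩ = w ⟨j, hj⟩) (x : M) :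
    projChain T A v l x = projChain T A w l x :=
  List.foldl_ext _ _ x fun y j hj => by split_ifs with h; exacts [by rw [hvw j h hj], rfl]

/-- The symbols of `A` that do not occur in `l` are summed over freely; the resulting factor
`2 ^ (#A - l.length)` is moved to the left to avoid truncated subtraction. -/
theorem two_pow_length_nsmul_sum_projChain (hT : ∀ j x, T j true x + T j false x = x)
    {l : List κ} (hl : l.Nodup) (hlA : ∀ j ∈ l, j ∈ A) (x : M) :
    2 ^ l.length • ∑ v : A → Bool, projChain T A v l x = 2 ^ A.card • x := by
  induction l with
  | nil => simp [projChain]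
  | cons a l ih =>
    obtain ⟨hal, hl⟩ := List.nodup_cons.1 hl
    have ha : a ∈ A := hlA a List.mem_cons_self
    let flip (v : A → Bool) : A → Bool := Function.update v ⟨a, ha⟩ (!v ⟨a, ha⟩)
    have hflip : Function.Involutive flip := fun v => by simp [flip]
    have hchain (v : A → Bool) (y : M) : projChain T A (flip v) l y = projChain T A v l y :=
      projChain_congr (fun j hj hjl => Function.update_of_ne (by grind) _ _) y
    have hsplit (b : Bool) : T a b x + T a (!b) x = x := by
      cases b
      · exact (add_comm _ _).trans (hT a x)
      · exact hT a x
    have hpair : 2 • ∑ v : A → Bool, projChain T A v (a :: l) x =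
        ∑ v : A → Bool, projChain T A v l x := by
      calc 2 • ∑ v : A → Bool, projChain T A v (a :: l) x
          = ∑ v : A → Bool, (projChain T A v l (T a (v ⟨a, ha⟩) x) +
              projChain T A (flip v) l (T a (flip v ⟨a, ha⟩) x)) := by
            rw [two_nsmul]
            nth_rw 2 [← hflip.bijective.sum_comp]
            rw [← Finset.sum_add_distrib]
            simp only [projChain_cons, dif_pos ha]
        _ = ∑ v : A → Bool, projChain T A v l x := by
            simp only [hchain, ← projChain_add, flip, Function.update_self, hsplit]
    rw [List.length_cons, pow_succ', mul_nsmul, hpair,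
      ih hl fun j hj => hlA j (List.mem_cons_of_mem a hj)]

theorem sum_projChain_of_toFinset_eq [IsAddTorsionFree M]
    (hT : ∀ j x, T j true x + T j false x = x)
    {l : List κ} (hl : l.Nodup) (hlA : l.toFinset = A) (x : M) :
    ∑ v : A → Bool, projChain T A v l x = x := by
  have hlen : l.length = A.card := by rw [← hlA, List.toFinset_card_of_nodup hl]
  refine nsmul_right_injective (pow_ne_zero l.length two_ne_zero) ?_
  dsimp only
  rw [two_pow_length_nsmul_sum_projChain hT hl (fun j hj => hlA ▸ List.mem_toFinset.2 hj), hlen]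

end ProjectionChain

omit [CompleteSpace H] in
lemma Hs_compl_eq_orthogonal (u : HilbertBasis ι ℂ H) (S : Set ι) : Hs u Sᶜ = (Hs u S)ᗮ := by
  have basis_mem {S' : Set ι} {i : ι} (hi : i ∈ S') : u i ∈ Hs u S' :=
    Submodule.le_topologicalClosure _ (Submodule.subset_span ⟨i, hi, rfl⟩)
  apply le_antisymm
  · rw [Hs, Hs, Submodule.orthogonal_closure]
    refine Submodule.topologicalClosure_minimal _ ?_ (Submodule.isClosed_orthogonal _)
    refine (Submodule.isOrtho_span.2 ?_).le
    rintro _ ⟨i, hi, rfl⟩ _ ⟨i', hi', rfl⟩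
    exact u.orthonormal.2 fun h => hi (h ▸ hi')
  · intro x hx
    refine (Submodule.isClosed_topologicalClosure _).mem_of_tendsto (u.hasSum_repr x)
      (.of_forall fun s => Submodule.sum_mem _ fun i _ => ?_)
    by_cases hi : i ∈ S
    · rw [u.repr_apply_apply, hx _ (basis_mem hi), zero_smul]
      exact Submodule.zero_mem _
    · exact Submodule.smul_mem _ _ (basis_mem hi)

lemma P_apply_add_P_compl_apply (u : HilbertBasis ι ℂ H) (S : Set ι) (x : H) :
    P u S x + P u Sᶜ x = x := by
  have h : P u Sᶜ = (Hs u S)ᗮ.starProjection := by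
    change (Hs u Sᶜ).starProjection = _
    congr! 1
    exact Hs_compl_eq_orthogonal u S
  rw [h]
  exact (Hs u S).starProjection_add_starProjection_orthogonal x

theorem stmt6_general (u : HilbertBasis ι ℂ H) (ψ : H) (hψ : ‖ψ‖ = 1)
    (lam : ℕ → ι → ℝ) (up : ℕ → Set ℝ) (α : PropForm)
    (htaut : ∀ v : {n // n ∈ α.symbols} → Bool, Sat α.symbols v α) :
    Prob u lam up ψ α = 1 := by
  have := IsAddTorsionFree.of_isTorsionFree ℂ H
  let T : ℕ → Bool → H →+ H := fun j b => Pj u lam j (if b then up j else (up j)ᶜ)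
  have hsum : ∑ v, projChain T α.symbols v (α.symbols.sort (· ≤ ·)) ψ = ψ :=
    sum_projChain_of_toFinset_eq (fun _ x => P_apply_add_P_compl_apply u _ x)
      (Finset.sort_nodup _ _) (Finset.sort_toFinset _ _) ψ
  calc Prob u lam up ψ α
      = (⟪ψ, ∑ v, projChain T α.symbols v (α.symbols.sort (· ≤ ·)) ψ⟫_ℂ).re := by
        rw [Prob, Finset.filter_true_of_mem fun v _ => htaut v, inner_sum, Complex.re_sum]
        rfl
    _ = 1 := by rw [hsum, inner_self_eq_norm_sq_to_K, hψ]; norm_num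

/-- If `α` is a tautology, then `Prob(α) = 1`. -/
theorem stmt6 (u : HilbertBasis ι ℂ H) (ψ : H) (hψ : ‖ψ‖ = 1)
    (O : ℕ → H →L[ℂ] H) (lam : ℕ → ι → ℝ)
    (heig : ∀ j i, O j (u i) = (lam j i : ℂ) • u i) (up : ℕ → Set ℝ) (α : PropForm)
    (htaut : ∀ v : {n // n ∈ α.symbols} → Bool, Sat α.symbols v α) :
    Prob u lam up ψ α = 1 :=
  stmt6_general u ψ hψ lam up α htaut

end
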